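/- arXiv:1806.10284 — 4 statements merged into one kernel-verified Lean document; each statement's English description precedes it below -/
import Mathlib

section
/- Let n₁, n₂ ≥ 1 be integers, m₁ an integer with 0 ≤ m₁ ≤ n₁, ρ₁ ∈ {0,1}, δx, δy > 0, κ ∈ ℝ³, a₁ = (n₁δx, 0, 0), and a₂ = ((m₁ − ρ₁n₁)δx, n₂δy, 0). Suppose f : ℝ³ → ℂ is quasi-periodic with Bloch vector κ along a₁ and along a₂. Then for every integer i with 0 ≤ i < n₁ and all c, z ∈ ℝ: if i < m₁ then f(iδx + c, n₂δy, z) = exp(2πι κ·(a₂ + ρ₁a₁ − a₁)) · f((i + n₁ − m₁)δx + c, 0, z), and if m₁ ≤ i then f(iδx + c, n₂δy, z) = exp(2πι κ·(a₂ + ρ₁a₁)) · f((i − m₁)δx + c, 0, z). (Theorem 3.2: periodicity of the field components along a₁ and a₂, encoded by the matrix J₂.) -/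
open Real

/-- The Euclidean dot product on `ℝ³` (as a triple of reals). -/
def dot3 (u v : ℝ × ℝ × ℝ) : ℝ := u.1 * v.1 + u.2.1 * v.2.1 + u.2.2 * v.2.2

/-- `f : ℝ³ → ℂ` is quasi-periodic with Bloch vector `κ` along `a`:
`f (x + a) = exp (2πι κ·a) * f x` for all `x ∈ ℝ³`. -/
def QuasiPeriodic (f : ℝ × ℝ × ℝ → ℂ) (κ a : ℝ × ℝ × ℝ) : Prop :=
  ∀ x : ℝ × ℝ × ℝ,
    f (x.1 + a.1, x.2.1 + a.2.1, x.2.2 + a.2.2)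
      = Complex.exp (2 * (π : ℂ) * Complex.I * (dot3 κ a : ℝ)) * f x

/-! The translations along which `f` is quasi-periodic with Bloch vector `κ` form an additive
subgroup of `ℝ³`. Hence `f` is quasi-periodic along `a₂ + ρ₁ a₁ - a₁` and along `a₂ + ρ₁ a₁`, and
these lattice vectors carry the face `y = 0` onto the face `y = n₂ δy` with exactly the
`x`-offsets of the statement. -/

lemma dot3_zero_right (u : ℝ × ℝ × ℝ) : dot3 u 0 = 0 := by
  simp [dot3]

lemma dot3_add_right (u v w : ℝ × ℝ × ℝ) : dot3 u (v + w) = dot3 u v + dot3 u w := by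
  simp only [dot3, Prod.fst_add, Prod.snd_add]
  ring

lemma dot3_neg_right (u v : ℝ × ℝ × ℝ) : dot3 u (-v) = -dot3 u v := by
  simp only [dot3, Prod.fst_neg, Prod.snd_neg]
  ring

namespace QuasiPeriodic

variable {f : ℝ × ℝ × ℝ → ℂ} {κ a b : ℝ × ℝ × ℝ}

lemma apply_add (h : QuasiPeriodic f κ a) (x : ℝ × ℝ × ℝ) :
    f (x + a) = Complex.exp (2 * (π : ℂ) * Complex.I * (dot3 κ a : ℝ)) * f x :=
  h x

lemma zero : QuasiPeriodic f κ 0 := fun x => by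
  simp [dot3_zero_right]

lemma add (ha : QuasiPeriodic f κ a) (hb : QuasiPeriodic f κ b) : QuasiPeriodic f κ (a + b) :=
  fun x => by
    change f (x + (a + b)) = _
    rw [← add_assoc, hb.apply_add, ha.apply_add, ← mul_assoc, ← Complex.exp_add,
      dot3_add_right]
    push_cast
    ring_nf

lemma neg (ha : QuasiPeriodic f κ a) : QuasiPeriodic f κ (-a) := fun x => by
  change f (x + -a) = _
  have h := ha.apply_add (x + -a)
  rw [neg_add_cancel_right] at h
  rw [h, ← mul_assoc, ← Complex.exp_add, dot3_neg_right]
  push_cast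
  ring_nf
  rw [Complex.exp_zero, one_mul]

end QuasiPeriodic

def quasiPeriods (f : ℝ × ℝ × ℝ → ℂ) (κ : ℝ × ℝ × ℝ) : AddSubgroup (ℝ × ℝ × ℝ) where
  carrier := {a | QuasiPeriodic f κ a}
  zero_mem' := QuasiPeriodic.zero
  add_mem' := QuasiPeriodic.add
  neg_mem' := QuasiPeriodic.neg

lemma mem_quasiPeriods {f : ℝ × ℝ × ℝ → ℂ} {κ a : ℝ × ℝ × ℝ} :
    a ∈ quasiPeriods f κ ↔ QuasiPeriodic f κ a :=
  Iff.rfl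

theorem stmt_1_general (n₁ n₂ : ℕ)
    (m₁ : ℕ) (ρ₁ : ℕ)
    (δx δy : ℝ) (κ : ℝ × ℝ × ℝ)
    (a₁ a₂ : ℝ × ℝ × ℝ)
    (ha₁ : a₁ = ((n₁ : ℝ) * δx, 0, 0))
    (ha₂ : a₂ = (((m₁ : ℝ) - (ρ₁ : ℝ) * n₁) * δx, (n₂ : ℝ) * δy, 0))
    (f : ℝ × ℝ × ℝ → ℂ)
    (hf₁ : QuasiPeriodic f κ a₁) (hf₂ : QuasiPeriodic f κ a₂) :
    ∀ i : ℕ, i < n₁ → ∀ c z : ℝ,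
      (i < m₁ →
        f ((i : ℝ) * δx + c, (n₂ : ℝ) * δy, z)
          = Complex.exp (2 * (π : ℂ) * Complex.I
                * (dot3 κ (a₂ + (ρ₁ : ℝ) • a₁ - a₁) : ℝ))
              * f (((i : ℝ) + n₁ - m₁) * δx + c, 0, z)) ∧
      (m₁ ≤ i →
        f ((i : ℝ) * δx + c, (n₂ : ℝ) * δy, z)
          = Complex.exp (2 * (π : ℂ) * Complex.I
                * (dot3 κ (a₂ + (ρ₁ : ℝ) • a₁) : ℝ))
              * f (((i : ℝ) - m₁) * δx + c, 0, z)) := by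
  intro i _ c z
  rw [← mem_quasiPeriods] at hf₁ hf₂
  have h_wrap : QuasiPeriodic f κ (a₂ + (ρ₁ : ℝ) • a₁ - a₁) := by
    rw [← mem_quasiPeriods, Nat.cast_smul_eq_nsmul]
    exact sub_mem (add_mem hf₂ (nsmul_mem hf₁ ρ₁)) hf₁
  have h_shift : QuasiPeriodic f κ (a₂ + (ρ₁ : ℝ) • a₁) := by
    rw [← mem_quasiPeriods, Nat.cast_smul_eq_nsmul]
    exact add_mem hf₂ (nsmul_mem hf₁ ρ₁)
  refine ⟨fun _ => ?_, fun _ => ?_⟩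
  · have hx : ((i : ℝ) * δx + c, (n₂ : ℝ) * δy, z)
        = (((i : ℝ) + n₁ - m₁) * δx + c, 0, z) + (a₂ + (ρ₁ : ℝ) • a₁ - a₁) := by
      ext <;> simp [ha₁, ha₂]
      ring
    rw [hx, h_wrap.apply_add]
  · have hx : ((i : ℝ) * δx + c, (n₂ : ℝ) * δy, z)
        = (((i : ℝ) - m₁) * δx + c, 0, z) + (a₂ + (ρ₁ : ℝ) • a₁) := by
      ext <;> simp [ha₁, ha₂]
      ring
    rw [hx, h_shift.apply_add]

/-- Theorem 3.2: periodicity of field components along `a₁` and `a₂`. -/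
theorem stmt_1 (n₁ n₂ : ℕ) (hn₁ : 1 ≤ n₁) (hn₂ : 1 ≤ n₂)
    (m₁ : ℕ) (hm₁ : m₁ ≤ n₁) (ρ₁ : ℕ) (hρ₁ : ρ₁ ≤ 1)
    (δx δy : ℝ) (hδx : 0 < δx) (hδy : 0 < δy) (κ : ℝ × ℝ × ℝ)
    (a₁ a₂ : ℝ × ℝ × ℝ)
    (ha₁ : a₁ = ((n₁ : ℝ) * δx, 0, 0))
    (ha₂ : a₂ = (((m₁ : ℝ) - (ρ₁ : ℝ) * n₁) * δx, (n₂ : ℝ) * δy, 0))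
    (f : ℝ × ℝ × ℝ → ℂ)
    (hf₁ : QuasiPeriodic f κ a₁) (hf₂ : QuasiPeriodic f κ a₂) :
    ∀ i : ℕ, i < n₁ → ∀ c z : ℝ,
      (i < m₁ →
        f ((i : ℝ) * δx + c, (n₂ : ℝ) * δy, z)
          = Complex.exp (2 * (π : ℂ) * Complex.I
                * (dot3 κ (a₂ + (ρ₁ : ℝ) • a₁ - a₁) : ℝ))
              * f (((i : ℝ) + n₁ - m₁) * δx + c, 0, z)) ∧
      (m₁ ≤ i →
        f ((i : ℝ) * δx + c, (n₂ : ℝ) * δy, z)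
          = Complex.exp (2 * (π : ℂ) * Complex.I
                * (dot3 κ (a₂ + (ρ₁ : ℝ) • a₁) : ℝ))
              * f (((i : ℝ) - m₁) * δx + c, 0, z)) :=
  stmt_1_general n₁ n₂ m₁ ρ₁ δx δy κ a₁ a₂ ha₁ ha₂ f hf₁ hf₂
end

section
/- Let n₁, n₂, n₃ ≥ 1 be integers and n := n₁n₂n₃. Let t ∈ ℝ, s : {1,…,n₁} → ℝ, and r : {1,…,n₁}×{1,…,n₂} → ℝ be arbitrary. For i ∈ {1,…,n₁}, j ∈ {1,…,n₂}, k ∈ {1,…,n₃} set θᵢ := 2πι(i+t)/n₁, θ_{i,j} := 2πι(j+s(i))/n₂, θ_{i,j,k} := 2πι(k+r(i,j))/n₃, and xᵢ := (e^{aθᵢ})_{a=0}^{n₁−1}, y_{i,j} := (e^{bθ_{i,j}})_{b=0}^{n₂−1}, z_{i,j,k} := (e^{cθ_{i,j,k}})_{c=0}^{n₃−1}. Then the n×n matrix T whose column indexed by (i,j,k) is n^{−1/2} · (z_{i,j,k} ⊗ y_{i,j} ⊗ xᵢ) is unitary, i.e. T*T = I_n. (Section 4.2: the assembled matrix T of common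 eigenvectors of the discrete partial derivative operators is unitary.) -/
open Real Matrix

/-! The columns of `T` are Kronecker products, so the inner product of two columns factors into
three one-dimensional sums `∑ₐ e^{2πι a (x' - x) / m}`. For the `x`-factor, `x' - x = i' - i` is
an integer of absolute value `< n₁`, so this geometric sum is `n₁ δ_{ii'}`. Once `i = i'` the
shifts `s(i)` agree and the same argument applies to `j`, and then, `r(i,j)` agreeing, to `k`. -/

open Complex in
/-- The paper's vector `(e^{aθ})_{a=0}^{m-1}` with `θ = 2πι x / m`. -/
noncomputable def phaseVec (m : ℕ) (x : ℝ) (a : Fin m) : ℂ :=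
  exp ((a : ℕ) * (2 * π * I * x / m))

open Complex in
lemma phaseVec_intCast_eq_pow (m : ℕ) (d : ℤ) (a : Fin m) :
    phaseVec m d a = (exp (2 * π * I / m) ^ d) ^ (a : ℕ) := by
  rw [phaseVec, ← Complex.exp_int_mul, ← Complex.exp_nat_mul]
  push_cast
  ring_nf

lemma star_phaseVec_mul_phaseVec (m : ℕ) (x y : ℝ) (a : Fin m) :
    star (phaseVec m x a) * phaseVec m y a = phaseVec m (y - x) a := by
  simp only [phaseVec, Complex.star_def, ← Complex.exp_conj, ← Complex.exp_add, map_mul, map_div₀,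
    Complex.conj_natCast, Complex.conj_ofReal, Complex.conj_I, map_ofNat]
  push_cast
  ring_nf

lemma sum_phaseVec_intCast {m : ℕ} (hm : m ≠ 0) (d : ℤ) :
    ∑ a : Fin m, phaseVec m d a = if (m : ℤ) ∣ d then (m : ℂ) else 0 := by
  have hζ := (Complex.isPrimitiveRoot_exp m hm).zpow_eq_one_iff_dvd d
  simp only [phaseVec_intCast_eq_pow]
  rw [Fin.sum_univ_eq_sum_range (fun a => (_ : ℂ) ^ a)]
  split_ifs with hd
  · simp [hζ.mpr hd]
  · rw [geom_sum_eq (mt hζ.mp hd), ← zpow_natCast, ← _root_.zpow_mul, mul_comm d,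
      _root_.zpow_mul, zpow_natCast, (Complex.isPrimitiveRoot_exp m hm).pow_eq_one,
      _root_.one_zpow, sub_self, zero_div]

lemma Fin.dvd_val_sub_val_iff {m : ℕ} (i i' : Fin m) : (m : ℤ) ∣ (i' : ℤ) - i ↔ i = i' := by
  refine ⟨fun h => ?_, fun h => by simp [h]⟩
  have := Int.eq_zero_of_abs_lt_dvd h (by rw [abs_lt]; omega)
  omega

lemma sum_star_phaseVec_mul_phaseVec {m : ℕ} (hm : m ≠ 0) (i i' : Fin m) (u : ℝ) :
    ∑ a : Fin m, star (phaseVec m ((i : ℕ) + 1 + u) a) * phaseVec m ((i' : ℕ) + 1 + u) a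
      = if i = i' then (m : ℂ) else 0 := by
  have hsub : ((i' : ℕ) + 1 + u) - ((i : ℕ) + 1 + u) = (((i' : ℤ) - i : ℤ) : ℝ) := by
    push_cast; ring
  simp only [star_phaseVec_mul_phaseVec, hsub, sum_phaseVec_intCast hm, Fin.dvd_val_sub_val_iff]

lemma sum_star_mul_prod {α β γ R : Type*} [Fintype α] [Fintype β] [Fintype γ]
    [CommSemiring R] [StarRing R] (κ : R) (a a' : α → R) (b b' : β → R) (c c' : γ → R) :
    ∑ p : α × β × γ, star (κ * a p.1 * b p.2.1 * c p.2.2) * (κ * a' p.1 * b' p.2.1 * c' p.2.2)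
      = star κ * κ * (∑ x, star (a x) * a' x) * (∑ y, star (b y) * b' y)
          * (∑ z, star (c z) * c' z) := by
  have hterm : ∀ x y z, star (κ * a x * b y * c z) * (κ * a' x * b' y * c' z)
      = star κ * κ * (star (a x) * a' x) * (star (b y) * b' y) * (star (c z) * c' z) :=
    fun _ _ _ => by simp only [star_mul']; ring
  simp only [Fintype.sum_prod_type, hterm, ← Finset.mul_sum, ← Finset.sum_mul]

/-- Section 4.2: the assembled matrix `T` of common eigenvectors, whose column
indexed by `(i,j,k)` is `n^{−1/2} (z_{i,j,k} ⊗ y_{i,j} ⊗ xᵢ)` with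
`xᵢ = (e^{aθᵢ})ₐ`, `θᵢ = 2πι(i+t)/n₁`, `y_{i,j} = (e^{bθ_{i,j}})_b`,
`θ_{i,j} = 2πι(j+s(i))/n₂`, `z_{i,j,k} = (e^{cθ_{i,j,k}})_c`,
`θ_{i,j,k} = 2πι(k+r(i,j))/n₃`, is unitary: `T*T = I`. -/
theorem stmt_9 (n₁ n₂ n₃ : ℕ) (hn₁ : 1 ≤ n₁) (hn₂ : 1 ≤ n₂) (hn₃ : 1 ≤ n₃)
    (t : ℝ) (s : ℕ → ℝ) (r : ℕ → ℕ → ℝ)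
    (T : Matrix (Fin n₃ × Fin n₂ × Fin n₁) (Fin n₁ × Fin n₂ × Fin n₃) ℂ)
    (hT : ∀ (p : Fin n₃ × Fin n₂ × Fin n₁) (q : Fin n₁ × Fin n₂ × Fin n₃),
      T p q = ((1 / Real.sqrt ((n₁ : ℝ) * n₂ * n₃) : ℝ) : ℂ)
        * Complex.exp (((p.1 : ℕ) : ℂ)
            * (2 * (π : ℂ) * Complex.I
                * ((((q.2.2 : ℕ) + 1 + r ((q.1 : ℕ) + 1) ((q.2.1 : ℕ) + 1) : ℝ)) : ℂ)
                / (n₃ : ℂ)))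
        * Complex.exp (((p.2.1 : ℕ) : ℂ)
            * (2 * (π : ℂ) * Complex.I
                * ((((q.2.1 : ℕ) + 1 + s ((q.1 : ℕ) + 1) : ℝ)) : ℂ)
                / (n₂ : ℂ)))
        * Complex.exp (((p.2.2 : ℕ) : ℂ)
            * (2 * (π : ℂ) * Complex.I
                * ((((q.1 : ℕ) + 1 + t : ℝ)) : ℂ)
                / (n₁ : ℂ)))) :
    Tᴴ * T = 1 := by
  set κ : ℂ := ((1 / Real.sqrt ((n₁ : ℝ) * n₂ * n₃) : ℝ) : ℂ)
  have hcol : ∀ p q, T p q = κ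
      * phaseVec n₃ ((q.2.2 : ℕ) + 1 + r ((q.1 : ℕ) + 1) ((q.2.1 : ℕ) + 1)) p.1
      * phaseVec n₂ ((q.2.1 : ℕ) + 1 + s ((q.1 : ℕ) + 1)) p.2.1
      * phaseVec n₁ ((q.1 : ℕ) + 1 + t) p.2.2 := hT
  have hκ : star κ * κ * n₃ * n₂ * n₁ = 1 := by
    have hN : (0 : ℝ) < n₁ * n₂ * n₃ := by positivity
    calc star κ * κ * n₃ * n₂ * n₁ = ((1 / (n₁ * n₂ * n₃) * (n₁ * n₂ * n₃) : ℝ) : ℂ) := by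
          rw [Complex.star_def, Complex.conj_ofReal, ← Complex.ofReal_mul, div_mul_div_comm,
            one_mul, Real.mul_self_sqrt hN.le]
          push_cast
          ring
      _ = 1 := by rw [one_div_mul_cancel hN.ne', Complex.ofReal_one]
  ext ⟨i, j, k⟩ ⟨i', j', k'⟩
  rw [mul_apply]
  simp only [conjTranspose_apply, hcol]
  rw [sum_star_mul_prod, sum_star_phaseVec_mul_phaseVec (by omega)]
  obtain rfl | hi := eq_or_ne i i'
  · simp only [sum_star_phaseVec_mul_phaseVec (m := n₂) (by omega)]
    obtain rfl | hj := eq_or_ne j j'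
    · simp only [sum_star_phaseVec_mul_phaseVec (m := n₃) (by omega)]
      obtain rfl | hk := eq_or_ne k k'
      · simpa using hκ
      · simp [hk]
    · simp [hj]
  · simp [hi]
end

section
/- Assume Λq is invertible (equivalently, all its diagonal entries are positive), and set Q₀ := (I₃ ⊗ T) · [Λ₁; Λ₂; Λ₃] · Λq^{−1/2} ∈ ℂ^{3n×n}, where [Λ₁; Λ₂; Λ₃] denotes the 3n×n vertically stacked matrix. Then: (i) Q₀*Q₀ = I_n; (ii) C·Q₀ = 0, hence C*C·Q₀ = 0; (iii) every x ∈ ℂ^{3n} with C*C·x = 0 equals Q₀·y for some y ∈ ℂ^n. That is, the columns of Q₀ form an orthonormal basis of the null space of C*C. (Section 5.1, construction of the null-space basis Q₀.) -/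
open Matrix Kronecker

/-- Vertically stacked `3n × n` matrix `[A; B; C]`. -/
def stack3 {n : ℕ} (A B C : Matrix (Fin n) (Fin n) ℂ) :
    Matrix (Fin 3 × Fin n) (Fin n) ℂ :=
  Matrix.of fun p t => if p.1 = 0 then A p.2 t else if p.1 = 1 then B p.2 t else C p.2 t

/-- The discrete curl operator `C = [[0, −C₃, C₂], [C₃, 0, −C₁], [−C₂, C₁, 0]]`. -/
def curlMat {n : ℕ} (C₁ C₂ C₃ : Matrix (Fin n) (Fin n) ℂ) :
    Matrix (Fin 3 × Fin n) (Fin 3 × Fin n) ℂ :=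
  Matrix.of fun p q =>
    if p.1 = 0 ∧ q.1 = 1 then -C₃ p.2 q.2
    else if p.1 = 0 ∧ q.1 = 2 then C₂ p.2 q.2
    else if p.1 = 1 ∧ q.1 = 0 then C₃ p.2 q.2
    else if p.1 = 1 ∧ q.1 = 2 then -C₁ p.2 q.2
    else if p.1 = 2 ∧ q.1 = 0 then -C₂ p.2 q.2
    else if p.1 = 2 ∧ q.1 = 1 then C₁ p.2 q.2
    else 0

/-- For a diagonal matrix `D` with positive real diagonal entries, the diagonal
matrix `D^{−1/2}` of reciprocal square roots of its entries. -/
noncomputable def invSqrtDiag {n : ℕ} (D : Matrix (Fin n) (Fin n) ℂ) :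
    Matrix (Fin n) (Fin n) ℂ :=
  Matrix.diagonal fun s => (((Real.sqrt ((D s s).re))⁻¹ : ℝ) : ℂ)

/-!
`T` diagonalises `C₁, C₂, C₃` simultaneously, so conjugation by the unitary `U = I₃ ⊗ T` turns `C`
into the curl `K` of `Λ₁, Λ₂, Λ₃`, which acts at each frequency `s` as the cross product with
`v(s) = (λ₁ s, λ₂ s, λ₃ s)`. With `S = [Λ₁; Λ₂; Λ₃]` this gives `K S = 0` (as `v × v = 0`), and the
Lagrange identity `[v]ₓᴴ [v]ₓ + v vᴴ = ‖v‖² I₃` gives `S Λq⁻¹ Sᴴ + (I₃ ⊗ Λq⁻¹) Kᴴ K = I`.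
Conjugating back, `Q₀ Q₀ᴴ + U (I₃ ⊗ Λq⁻¹) Uᴴ Cᴴ C = I`, so every `x` with `Cᴴ C x = 0` equals
`Q₀ (Q₀ᴴ x)`.
-/

local notation "I₃" => (1 : Matrix (Fin 3) (Fin 3) ℂ)

variable {n : ℕ}

theorem curlMat_mul_one_kronecker (A B C T : Matrix (Fin n) (Fin n) ℂ) :
    curlMat A B C * (I₃ ⊗ₖ T) = curlMat (A * T) (B * T) (C * T) := by
  ext ⟨i, s⟩ ⟨j, t⟩
  fin_cases i <;> fin_cases j <;>
    simp [curlMat, mul_apply, Fintype.sum_prod_type, one_apply]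

theorem one_kronecker_mul_curlMat (A B C T : Matrix (Fin n) (Fin n) ℂ) :
    (I₃ ⊗ₖ T) * curlMat A B C = curlMat (T * A) (T * B) (T * C) := by
  ext ⟨i, s⟩ ⟨j, t⟩
  fin_cases i <;> fin_cases j <;>
    simp [curlMat, mul_apply, Fintype.sum_prod_type, Fin.sum_univ_three, one_apply]

theorem one_kronecker_mul_stack3 (A B C T : Matrix (Fin n) (Fin n) ℂ) :
    (I₃ ⊗ₖ T) * stack3 A B C = stack3 (T * A) (T * B) (T * C) := by
  ext ⟨i, s⟩ t
  fin_cases i <;> simp [stack3, mul_apply, Fintype.sum_prod_type, Fin.sum_univ_three, one_apply]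

theorem stack3_mul (A B C M : Matrix (Fin n) (Fin n) ℂ) :
    stack3 A B C * M = stack3 (A * M) (B * M) (C * M) := by
  ext ⟨i, s⟩ t
  fin_cases i <;> simp [stack3, mul_apply]

theorem conjTranspose_stack3_mul_stack3 (A B C A' B' C' : Matrix (Fin n) (Fin n) ℂ) :
    (stack3 A B C)ᴴ * stack3 A' B' C' = Aᴴ * A' + Bᴴ * B' + Cᴴ * C' := by
  ext s t
  simp [mul_apply, Fintype.sum_prod_type, Fin.sum_univ_three, stack3]

theorem curlMat_mul_stack3 (A B C X Y Z : Matrix (Fin n) (Fin n) ℂ) :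
    curlMat A B C * stack3 X Y Z = stack3 (B * Z - C * Y) (C * X - A * Z) (A * Y - B * X) := by
  ext ⟨i, s⟩ t
  fin_cases i <;>
    simp [curlMat, stack3, mul_apply, Fintype.sum_prod_type, Fin.sum_univ_three, sub_eq_add_neg,
      add_comm]

theorem conjTranspose_one_kronecker_mul_one_kronecker (A B : Matrix (Fin n) (Fin n) ℂ) :
    (I₃ ⊗ₖ A)ᴴ * (I₃ ⊗ₖ B)
      = I₃ ⊗ₖ (Aᴴ * B) := by
  rw [conjTranspose_kronecker, conjTranspose_one, ← mul_kronecker_mul, Matrix.one_mul]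

theorem one_kronecker_mul_conjTranspose_one_kronecker (A B : Matrix (Fin n) (Fin n) ℂ) :
    (I₃ ⊗ₖ A) * (I₃ ⊗ₖ B)ᴴ
      = I₃ ⊗ₖ (A * Bᴴ) := by
  rw [conjTranspose_kronecker, conjTranspose_one, ← mul_kronecker_mul, Matrix.one_mul]

theorem curlMat_mul_one_kronecker_of_mul_eq {T Λ₁ Λ₂ Λ₃ C₁ C₂ C₃ : Matrix (Fin n) (Fin n) ℂ}
    (h₁ : C₁ * T = T * Λ₁) (h₂ : C₂ * T = T * Λ₂) (h₃ : C₃ * T = T * Λ₃) :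
    curlMat C₁ C₂ C₃ * (I₃ ⊗ₖ T)
      = (I₃ ⊗ₖ T) * curlMat Λ₁ Λ₂ Λ₃ := by
  rw [curlMat_mul_one_kronecker, one_kronecker_mul_curlMat, h₁, h₂, h₃]

theorem curlMat_diagonal_mul_stack3_diagonal (d₁ d₂ d₃ : Fin n → ℂ) :
    curlMat (diagonal d₁) (diagonal d₂) (diagonal d₃)
      * stack3 (diagonal d₁) (diagonal d₂) (diagonal d₃) = 0 := by
  rw [curlMat_mul_stack3, (commute_diagonal d₂ d₃).eq, (commute_diagonal d₃ d₁).eq,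
    (commute_diagonal d₁ d₂).eq]
  ext ⟨i, s⟩ t
  fin_cases i <;> simp [stack3]

theorem conjTranspose_diagonal_mul_diagonal_add (d₁ d₂ d₃ : Fin n → ℂ) :
    (diagonal d₁)ᴴ * diagonal d₁ + (diagonal d₂)ᴴ * diagonal d₂ + (diagonal d₃)ᴴ * diagonal d₃
      = diagonal fun s => ((Complex.normSq (d₁ s) + Complex.normSq (d₂ s)
          + Complex.normSq (d₃ s) : ℝ) : ℂ) := by
  simp only [diagonal_conjTranspose, diagonal_mul_diagonal, diagonal_add]
  congr 1
  funext s
  simp [Complex.normSq_eq_conj_mul_self]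

theorem curlMat_diagonal_lagrange (d₁ d₂ d₃ : Fin n → ℂ) :
    (curlMat (diagonal d₁) (diagonal d₂) (diagonal d₃))ᴴ
        * curlMat (diagonal d₁) (diagonal d₂) (diagonal d₃)
      + stack3 (diagonal d₁) (diagonal d₂) (diagonal d₃)
        * (stack3 (diagonal d₁) (diagonal d₂) (diagonal d₃))ᴴ
      = I₃ ⊗ₖ
          ((diagonal d₁)ᴴ * diagonal d₁ + (diagonal d₂)ᴴ * diagonal d₂
            + (diagonal d₃)ᴴ * diagonal d₃) := by
  ext ⟨i, s⟩ ⟨j, t⟩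
  rcases eq_or_ne s t with rfl | hst
  · fin_cases i <;> fin_cases j <;>
      simp [curlMat, stack3, mul_apply, Fintype.sum_prod_type, Fin.sum_univ_three,
        diagonal_apply, one_apply] <;> ring
  · fin_cases i <;> fin_cases j <;>
      simp [curlMat, stack3, mul_apply, Fintype.sum_prod_type, diagonal_apply, one_apply, hst,
        hst.symm]

theorem stack3_diagonal_mul_mul_conjTranspose_add {Λ D : Matrix (Fin n) (Fin n) ℂ}
    (d₁ d₂ d₃ : Fin n → ℂ)
    (hΛ : Λ = (diagonal d₁)ᴴ * diagonal d₁ + (diagonal d₂)ᴴ * diagonal d₂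
      + (diagonal d₃)ᴴ * diagonal d₃)
    (hD : D.IsDiag) (hDΛ : D * Dᴴ * Λ = 1) :
    stack3 (diagonal d₁) (diagonal d₂) (diagonal d₃) * D
        * (stack3 (diagonal d₁) (diagonal d₂) (diagonal d₃) * D)ᴴ
      + (I₃ ⊗ₖ (D * Dᴴ))
        * ((curlMat (diagonal d₁) (diagonal d₂) (diagonal d₃))ᴴ
          * curlMat (diagonal d₁) (diagonal d₂) (diagonal d₃)) = 1 := by
  obtain ⟨e, he⟩ : ∃ e, D * Dᴴ = diagonal e := by
    rw [← hD.diagonal_diag, diagonal_conjTranspose, diagonal_mul_diagonal]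
    exact ⟨_, rfl⟩
  have hcomm : stack3 (diagonal d₁) (diagonal d₂) (diagonal d₃) * diagonal e
      = (I₃ ⊗ₖ diagonal e)
        * stack3 (diagonal d₁) (diagonal d₂) (diagonal d₃) := by
    rw [stack3_mul, one_kronecker_mul_stack3, (commute_diagonal d₁ e).eq,
      (commute_diagonal d₂ e).eq, (commute_diagonal d₃ e).eq]
  rw [he, hΛ] at hDΛ
  rw [conjTranspose_mul, Matrix.mul_assoc, ← Matrix.mul_assoc D, he, ← Matrix.mul_assoc, hcomm,
    Matrix.mul_assoc, ← Matrix.mul_add, add_comm, curlMat_diagonal_lagrange, ← mul_kronecker_mul,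
    Matrix.one_mul, hDΛ, one_kronecker_one]

theorem conjTranspose_invSqrtDiag (D : Matrix (Fin n) (Fin n) ℂ) :
    (invSqrtDiag D)ᴴ = invSqrtDiag D := by
  simp [invSqrtDiag, diagonal_conjTranspose]

theorem isDiag_invSqrtDiag (D : Matrix (Fin n) (Fin n) ℂ) : (invSqrtDiag D).IsDiag :=
  isDiag_diagonal _

theorem invSqrtDiag_diagonal_ofReal (q : Fin n → ℝ) :
    invSqrtDiag (diagonal fun s => (q s : ℂ)) = diagonal fun s => (((√(q s))⁻¹ : ℝ) : ℂ) := by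
  simp [invSqrtDiag]

section PositiveDiagonal

variable {Λ : Matrix (Fin n) (Fin n) ℂ} {q : Fin n → ℝ}

theorem invSqrtDiag_mul_invSqrtDiag_mul_self (hΛ : Λ = diagonal fun s => (q s : ℂ))
    (hq : ∀ s, 0 < q s) : invSqrtDiag Λ * invSqrtDiag Λ * Λ = 1 := by
  subst hΛ
  rw [invSqrtDiag_diagonal_ofReal, diagonal_mul_diagonal, diagonal_mul_diagonal, ← diagonal_one]
  congr 1
  funext s
  have hsq : (√(q s))⁻¹ * (√(q s))⁻¹ * q s = 1 := by
    rw [← mul_inv, Real.mul_self_sqrt (hq s).le, inv_mul_cancel₀ (hq s).ne']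
  exact_mod_cast hsq

theorem invSqrtDiag_mul_mul_invSqrtDiag (hΛ : Λ = diagonal fun s => (q s : ℂ))
    (hq : ∀ s, 0 < q s) : invSqrtDiag Λ * Λ * invSqrtDiag Λ = 1 := by
  have h := invSqrtDiag_mul_invSqrtDiag_mul_self hΛ hq
  subst hΛ
  rw [invSqrtDiag_diagonal_ofReal] at h ⊢
  rwa [Matrix.mul_assoc, (commute_diagonal _ _).eq, ← Matrix.mul_assoc]

end PositiveDiagonal

theorem exists_mulVec_eq_of_mul_add_mul_eq_one {α m k : Type*} [Semiring α] [Fintype m]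
    [DecidableEq m] [Fintype k] {Q : Matrix m k α} {Q' : Matrix k m α}
    {P A : Matrix m m α} (h : Q * Q' + P * A = 1) {x : m → α} (hx : A *ᵥ x = 0) :
    ∃ y, Q *ᵥ y = x :=
  ⟨Q' *ᵥ x, calc
    Q *ᵥ (Q' *ᵥ x) = (Q * Q' + P * A) *ᵥ x := by
      rw [add_mulVec, ← mulVec_mulVec, ← mulVec_mulVec, hx, mulVec_zero, add_zero]
    _ = x := by rw [h, one_mulVec]⟩

section UnitaryConjugation

variable {α : Type*} [CommRing α] [StarRing α] {m k : Type*} [Fintype m] [DecidableEq m]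

theorem conjTranspose_mul_self_unitary_mul {U : Matrix m m α} (hU : Uᴴ * U = 1)
    (R : Matrix m k α) :
    (U * R)ᴴ * (U * R) = Rᴴ * R := by
  rw [conjTranspose_mul, Matrix.mul_assoc, ← Matrix.mul_assoc Uᴴ, hU, Matrix.one_mul]

theorem conjTranspose_mul_self_mul_conjTranspose_of_mul_eq {U C K : Matrix m m α}
    (hU : Uᴴ * U = 1) (hU' : U * Uᴴ = 1) (h : C * U = U * K) :
    Kᴴ * K * Uᴴ = Uᴴ * (Cᴴ * C) := by
  have hK : K = Uᴴ * C * U := by rw [Matrix.mul_assoc, h, ← Matrix.mul_assoc, hU, Matrix.one_mul]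
  subst hK
  simp only [conjTranspose_mul, conjTranspose_conjTranspose, Matrix.mul_assoc]
  rw [← Matrix.mul_assoc U Uᴴ, hU', Matrix.one_mul, Matrix.mul_one]

theorem mul_conjTranspose_add_mul_eq_one_of_mul_eq [Fintype k] {U C K P : Matrix m m α}
    {R : Matrix m k α}
    (hU : Uᴴ * U = 1) (hU' : U * Uᴴ = 1) (hCU : C * U = U * K)
    (h : R * Rᴴ + P * (Kᴴ * K) = 1) :
    U * R * (U * R)ᴴ + U * P * Uᴴ * (Cᴴ * C) = 1 := by
  calc U * R * (U * R)ᴴ + U * P * Uᴴ * (Cᴴ * C)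
      = U * (R * Rᴴ + P * (Kᴴ * K)) * Uᴴ := by
        rw [Matrix.mul_assoc (U * P),
          ← conjTranspose_mul_self_mul_conjTranspose_of_mul_eq hU hU' hCU, conjTranspose_mul]
        simp only [Matrix.mul_add, Matrix.add_mul, Matrix.mul_assoc]
    _ = 1 := by rw [h, Matrix.mul_one, hU']

end UnitaryConjugation

theorem stmt_11_general (n : ℕ)
    (T Λ₁ Λ₂ Λ₃ C₁ C₂ C₃ : Matrix (Fin n) (Fin n) ℂ)
    (hT : Tᴴ * T = 1) (hT' : T * Tᴴ = 1)
    (hΛ₁ : Λ₁.IsDiag) (hΛ₂ : Λ₂.IsDiag) (hΛ₃ : Λ₃.IsDiag)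
    (h₁ : C₁ * T = T * Λ₁) (h₂ : C₂ * T = T * Λ₂) (h₃ : C₃ * T = T * Λ₃)
    (Λq : Matrix (Fin n) (Fin n) ℂ)
    (hΛq : Λq = Λ₁ᴴ * Λ₁ + Λ₂ᴴ * Λ₂ + Λ₃ᴴ * Λ₃)
    (hpos : ∀ s, 0 < (Λq s s).re)
    (Q₀ : Matrix (Fin 3 × Fin n) (Fin n) ℂ)
    (hQ₀ : Q₀ = ((1 : Matrix (Fin 3) (Fin 3) ℂ) ⊗ₖ T) * stack3 Λ₁ Λ₂ Λ₃ * invSqrtDiag Λq) :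
    Q₀ᴴ * Q₀ = 1 ∧
    curlMat C₁ C₂ C₃ * Q₀ = 0 ∧
    (curlMat C₁ C₂ C₃)ᴴ * curlMat C₁ C₂ C₃ * Q₀ = 0 ∧
    ∀ x : Fin 3 × Fin n → ℂ,
      ((curlMat C₁ C₂ C₃)ᴴ * curlMat C₁ C₂ C₃).mulVec x = 0 →
      ∃ y : Fin n → ℂ, Q₀.mulVec y = x := by
  obtain ⟨d₁, rfl⟩ : ∃ d, Λ₁ = diagonal d := ⟨_, hΛ₁.diagonal_diag.symm⟩
  obtain ⟨d₂, rfl⟩ : ∃ d, Λ₂ = diagonal d := ⟨_, hΛ₂.diagonal_diag.symm⟩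
  obtain ⟨d₃, rfl⟩ : ∃ d, Λ₃ = diagonal d := ⟨_, hΛ₃.diagonal_diag.symm⟩
  rw [Matrix.mul_assoc] at hQ₀
  have hU : (I₃ ⊗ₖ T)ᴴ * (I₃ ⊗ₖ T) = 1 := by
    rw [conjTranspose_one_kronecker_mul_one_kronecker, hT, one_kronecker_one]
  have hU' : (I₃ ⊗ₖ T) * (I₃ ⊗ₖ T)ᴴ = 1 := by
    rw [one_kronecker_mul_conjTranspose_one_kronecker, hT', one_kronecker_one]
  have hCU := curlMat_mul_one_kronecker_of_mul_eq h₁ h₂ h₃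
  have hΛq' := hΛq.trans (conjTranspose_diagonal_mul_diagonal_add _ _ _)
  have hq := fun s => by simpa only [hΛq', diagonal_apply_eq, Complex.ofReal_re] using hpos s
  have hCQ : curlMat C₁ C₂ C₃ * Q₀ = 0 := by
    rw [hQ₀, ← Matrix.mul_assoc, hCU, Matrix.mul_assoc, ← Matrix.mul_assoc (curlMat _ _ _),
      curlMat_diagonal_mul_stack3_diagonal, Matrix.zero_mul, Matrix.mul_zero]
  refine ⟨?_, hCQ, by rw [Matrix.mul_assoc, hCQ, Matrix.mul_zero], fun x hx => ?_⟩
  · rw [hQ₀, conjTranspose_mul_self_unitary_mul hU, conjTranspose_mul, Matrix.mul_assoc,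
      ← Matrix.mul_assoc (stack3 _ _ _)ᴴ, conjTranspose_stack3_mul_stack3, ← hΛq,
      conjTranspose_invSqrtDiag, ← Matrix.mul_assoc, invSqrtDiag_mul_mul_invSqrtDiag hΛq' hq]
  · have hD : invSqrtDiag Λq * (invSqrtDiag Λq)ᴴ * Λq = 1 := by
      rw [conjTranspose_invSqrtDiag, invSqrtDiag_mul_invSqrtDiag_mul_self hΛq' hq]
    have hproj := mul_conjTranspose_add_mul_eq_one_of_mul_eq hU hU' hCU
      (stack3_diagonal_mul_mul_conjTranspose_add _ _ _ hΛq (isDiag_invSqrtDiag Λq) hD)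
    rw [← hQ₀] at hproj
    exact exists_mulVec_eq_of_mul_add_mul_eq_one hproj hx

/-- Section 5.1: with `Q₀ = (I₃ ⊗ T)[Λ₁; Λ₂; Λ₃]Λq^{−1/2}`, the columns of `Q₀`
form an orthonormal basis of the null space of `C*C`. -/
theorem stmt_11 (n : ℕ) (hn : 1 ≤ n)
    (T Λ₁ Λ₂ Λ₃ C₁ C₂ C₃ : Matrix (Fin n) (Fin n) ℂ)
    (hT : Tᴴ * T = 1) (hT' : T * Tᴴ = 1)
    (hΛ₁ : Λ₁.IsDiag) (hΛ₂ : Λ₂.IsDiag) (hΛ₃ : Λ₃.IsDiag)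
    (h₁ : C₁ * T = T * Λ₁) (h₂ : C₂ * T = T * Λ₂) (h₃ : C₃ * T = T * Λ₃)
    (Λq : Matrix (Fin n) (Fin n) ℂ)
    (hΛq : Λq = Λ₁ᴴ * Λ₁ + Λ₂ᴴ * Λ₂ + Λ₃ᴴ * Λ₃)
    (hpos : ∀ s, 0 < (Λq s s).re)
    (Q₀ : Matrix (Fin 3 × Fin n) (Fin n) ℂ)
    (hQ₀ : Q₀ = ((1 : Matrix (Fin 3) (Fin 3) ℂ) ⊗ₖ T) * stack3 Λ₁ Λ₂ Λ₃ * invSqrtDiag Λq) :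
    Q₀ᴴ * Q₀ = 1 ∧
    curlMat C₁ C₂ C₃ * Q₀ = 0 ∧
    (curlMat C₁ C₂ C₃)ᴴ * curlMat C₁ C₂ C₃ * Q₀ = 0 ∧
    ∀ x : Fin 3 × Fin n → ℂ,
      ((curlMat C₁ C₂ C₃)ᴴ * curlMat C₁ C₂ C₃).mulVec x = 0 →
      ∃ y : Fin n → ℂ, Q₀.mulVec y = x :=
  stmt_11_general n T Λ₁ Λ₂ Λ₃ C₁ C₂ C₃ hT hT' hΛ₁ hΛ₂ hΛ₃ h₁ h₂ h₃ Λq hΛq hpos Q₀ hQ₀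
end

section
/- Assume the diagonal matrices Λq and 3Λq − Λp are invertible (their entries, which are automatically nonnegative reals, are positive). Define Q₀ := (I₃⊗T)[Λ₁;Λ₂;Λ₃]Λq^{−1/2}, Q₁ := (I₃⊗T)[Λq−Λ₁Λs*; Λq−Λ₂Λs*; Λq−Λ₃Λs*]·((3Λq−Λp)Λq)^{−1/2}, Q₂ := (I₃⊗T)[Λ₃*−Λ₂*; Λ₁*−Λ₃*; Λ₂*−Λ₁*]·(3Λq−Λp)^{−1/2}, and Q := [Q₁, Q₂, Q₀] ∈ ℂ^{3n×3n} (columns concatenated). Then Q is unitary and C*C = Q · blockdiag(Λq, Λq, 0) · Q*. (Section 5.1, the eigen-decomposition of the discrete double-curl matrix C*C; the diagonal normalizing factors are those that make the columns orthonormal in the paper's construction Q₁ = (I − Q₀Q₀*)[T;T;T]·N₁, Q₂ = C*[T;T;T]·N₂.) -/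
/-!
After conjugation by the unitary `I₃ ⊗ T`, every matrix in the statement becomes block diagonal
with one `3 × 3` block per eigenvalue index `s`. Writing `x = (λ₁, λ₂, λ₃)(s)`,
`q = ‖x‖²` and `σ = λ₁ + λ₂ + λ₃`, the curl becomes the cross-product matrix `K x`, and the
block of `Q` has the columns `q 𝟙 - σ̄ x`, `(K x)ᴴ 𝟙 = 𝟙 × x̄` and `x`, scaled by `(r q)^{-1/2}`,
`r^{-1/2}` and `q^{-1/2}`, where `r = 3 q - |σ|²`. These columns are pairwise orthogonal with
squared norms `r q`, `r` and `q`, so each block is unitary; and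
`(K x)ᴴ (K x) = q I - x xᴴ` is `q` times the orthogonal projection onto `x^⊥`, which is spanned
by the first two columns. Both facts are polynomial identities in `x` and `x̄` once the
normalizations are cleared.
-/

open Matrix Kronecker

/-- Horizontally concatenated `3n × 3n` matrix `[A, B, C]` from three `3n × n` blocks. -/
def hstack3 {n : ℕ} (A B C : Matrix (Fin 3 × Fin n) (Fin n) ℂ) :
    Matrix (Fin 3 × Fin n) (Fin 3 × Fin n) ℂ :=
  Matrix.of fun p q => if q.1 = 0 then A p q.2 else if q.1 = 1 then B p q.2 else C p q.2

/-- The `3n × 3n` block diagonal matrix `blockdiag(A, B, 0)`. -/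
def blockdiag3 {n : ℕ} (A B : Matrix (Fin n) (Fin n) ℂ) :
    Matrix (Fin 3 × Fin n) (Fin 3 × Fin n) ℂ :=
  Matrix.of fun p q =>
    if p.1 = q.1 then
      (if p.1 = 0 then A p.2 q.2 else if p.1 = 1 then B p.2 q.2 else 0)
    else 0

open ComplexConjugate

namespace DoubleCurl

def crossMatrix {R : Type*} [Ring R] (a b c : R) : Matrix (Fin 3) (Fin 3) R :=
  !![0, -c, b; c, 0, -a; -b, a, 0]

def sqNorm (a b c : ℂ) : ℂ := conj a * a + conj b * b + conj c * c

/-- The squared norm of `𝟙 × x̄`, by Lagrange's identity. -/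
def spread (a b c : ℂ) : ℂ := 3 * sqNorm a b c - (a + b + c) * conj (a + b + c)

/-- The `s`-th blocks of the paper's `Q₁`, `Q₂`, `Q₀` before normalization. -/
def curlFrame (a b c : ℂ) : Matrix (Fin 3) (Fin 3) ℂ :=
  !![sqNorm a b c - a * conj (a + b + c), conj c - conj b, a;
     sqNorm a b c - b * conj (a + b + c), conj a - conj c, b;
     sqNorm a b c - c * conj (a + b + c), conj b - conj a, c]

noncomputable def unitCurlFrame (a b c : ℂ) : Matrix (Fin 3) (Fin 3) ℂ :=
  curlFrame a b c * diagonal ![(((√(spread a b c * sqNorm a b c).re)⁻¹ : ℝ) : ℂ),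
    (((√(spread a b c).re)⁻¹ : ℝ) : ℂ), (((√(sqNorm a b c).re)⁻¹ : ℝ) : ℂ)]

lemma sqNorm_im (a b c : ℂ) : (sqNorm a b c).im = 0 := by
  simp [sqNorm]; ring

lemma spread_im (a b c : ℂ) : (spread a b c).im = 0 := by
  simp [spread, sqNorm_im]; ring

lemma ofReal_inv_sqrt_re_sq_mul {z : ℂ} (hz : z.im = 0) (h : 0 < z.re) :
    (((√z.re)⁻¹ : ℝ) : ℂ) ^ 2 * z = 1 := by
  obtain ⟨x, rfl⟩ : ∃ x : ℝ, z = x := ⟨z.re, Complex.ext rfl (by simp [hz])⟩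
  rw [Complex.ofReal_re] at h ⊢
  norm_cast
  rw [inv_pow, Real.sq_sqrt h.le, inv_mul_cancel₀ h.ne']

lemma diagonal_ofReal_conjTranspose (α β γ : ℝ) :
    (diagonal ![(α : ℂ), β, γ])ᴴ = diagonal ![(α : ℂ), β, γ] := by
  rw [diagonal_conjTranspose]
  congr 1
  ext i
  fin_cases i <;> simp

lemma curlFrame_conjTranspose_mul_self (a b c : ℂ) :
    (curlFrame a b c)ᴴ * curlFrame a b c =
      diagonal ![spread a b c * sqNorm a b c, spread a b c, sqNorm a b c] := by
  ext i j
  fin_cases i <;> fin_cases j <;>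
    simp [curlFrame, sqNorm, spread, mul_apply, Fin.sum_univ_three, conjTranspose_apply] <;> ring

lemma curlFrame_mul_diagonal_mul_conjTranspose (a b c : ℂ) :
    curlFrame a b c * diagonal ![1, sqNorm a b c, 0] * (curlFrame a b c)ᴴ =
      spread a b c • ((crossMatrix a b c)ᴴ * crossMatrix a b c) := by
  ext i j
  fin_cases i <;> fin_cases j <;>
    simp [curlFrame, crossMatrix, sqNorm, spread, mul_apply, Fin.sum_univ_three,
      conjTranspose_apply, vecMul_diagonal] <;> ring

section Normalization

variable {a b c : ℂ} {α β γ : ℝ}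

lemma curlFrame_mul_diagonal_conjTranspose_mul_self
    (hα : (α : ℂ) ^ 2 * (spread a b c * sqNorm a b c) = 1)
    (hβ : (β : ℂ) ^ 2 * spread a b c = 1) (hγ : (γ : ℂ) ^ 2 * sqNorm a b c = 1) :
    (curlFrame a b c * diagonal ![(α : ℂ), β, γ])ᴴ * (curlFrame a b c * diagonal ![(α : ℂ), β, γ])
      = 1 := by
  rw [conjTranspose_mul, diagonal_ofReal_conjTranspose, Matrix.mul_assoc,
    ← Matrix.mul_assoc (curlFrame a b c)ᴴ, curlFrame_conjTranspose_mul_self,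
    diagonal_mul_diagonal, diagonal_mul_diagonal, ← diagonal_one]
  congr 1
  ext i
  fin_cases i
  · simp; linear_combination hα
  · simp; linear_combination hβ
  · simp; linear_combination hγ

lemma curlFrame_mul_diagonal_eigen
    (hα : (α : ℂ) ^ 2 * (spread a b c * sqNorm a b c) = 1) (hβ : (β : ℂ) ^ 2 * spread a b c = 1) :
    curlFrame a b c * diagonal ![(α : ℂ), β, γ] * diagonal ![sqNorm a b c, sqNorm a b c, 0] *
        (curlFrame a b c * diagonal ![(α : ℂ), β, γ])ᴴ =
      (crossMatrix a b c)ᴴ * crossMatrix a b c := by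
  have hs : spread a b c ≠ 0 := right_ne_zero_of_mul_eq_one hβ
  have hN : diagonal ![(α : ℂ), β, γ] * diagonal ![sqNorm a b c, sqNorm a b c, 0] *
      diagonal ![(α : ℂ), β, γ] = (spread a b c)⁻¹ • diagonal ![1, sqNorm a b c, 0] := by
    rw [diagonal_mul_diagonal, diagonal_mul_diagonal, ← diagonal_smul]
    congr 1
    ext i
    fin_cases i
    · simp; exact eq_inv_of_mul_eq_one_left (by linear_combination hα)
    · simp; rw [← eq_inv_of_mul_eq_one_left hβ]; ring
    · simp
  calc _ = curlFrame a b c * (diagonal ![(α : ℂ), β, γ] *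
          diagonal ![sqNorm a b c, sqNorm a b c, 0] * diagonal ![(α : ℂ), β, γ]) *
          (curlFrame a b c)ᴴ := by
        simp only [conjTranspose_mul, diagonal_ofReal_conjTranspose, Matrix.mul_assoc]
    _ = _ := by
        rw [hN, Matrix.mul_smul, Matrix.smul_mul, curlFrame_mul_diagonal_mul_conjTranspose,
          smul_smul, inv_mul_cancel₀ hs, one_smul]

end Normalization

lemma unitCurlFrame_unitary_and_eigen {a b c : ℂ} (hq : 0 < (sqNorm a b c).re)
    (hr : 0 < (spread a b c).re) :
    (unitCurlFrame a b c)ᴴ * unitCurlFrame a b c = 1 ∧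
      unitCurlFrame a b c * diagonal ![sqNorm a b c, sqNorm a b c, 0] * (unitCurlFrame a b c)ᴴ =
        (crossMatrix a b c)ᴴ * crossMatrix a b c := by
  have hα := ofReal_inv_sqrt_re_sq_mul (z := spread a b c * sqNorm a b c)
    (by simp [spread_im, sqNorm_im]) (by simpa [spread_im, sqNorm_im] using mul_pos hr hq)
  have hβ := ofReal_inv_sqrt_re_sq_mul (spread_im a b c) hr
  have hγ := ofReal_inv_sqrt_re_sq_mul (sqNorm_im a b c) hq
  exact ⟨curlFrame_mul_diagonal_conjTranspose_mul_self hα hβ hγ,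
    curlFrame_mul_diagonal_eigen hα hβ⟩

section BlockDiagonal

variable {m o R : Type*} [Fintype m] [Fintype o] [DecidableEq o] [Ring R] [StarRing R]

lemma conjTranspose_mul_self_mul_blockDiagonal_eq_one [DecidableEq m]
    {U : Matrix (m × o) (m × o) R} (hU : Uᴴ * U = 1) {M : o → Matrix m m R}
    (hM : ∀ s, (M s)ᴴ * M s = 1) :
    (U * blockDiagonal M)ᴴ * (U * blockDiagonal M) = 1 := by
  rw [conjTranspose_mul, mul_assoc, ← mul_assoc Uᴴ, hU, one_mul, blockDiagonal_conjTranspose,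
    ← blockDiagonal_mul]
  simp only [hM]
  exact blockDiagonal_one

lemma conjTranspose_mul_self_conj_blockDiagonal [DecidableEq m] {U : Matrix (m × o) (m × o) R}
    (hU : Uᴴ * U = 1) (K : o → Matrix m m R) :
    (U * blockDiagonal K * Uᴴ)ᴴ * (U * blockDiagonal K * Uᴴ) =
      U * blockDiagonal (fun s => (K s)ᴴ * K s) * Uᴴ := by
  simp only [conjTranspose_mul, conjTranspose_conjTranspose, blockDiagonal_conjTranspose,
    blockDiagonal_mul, mul_assoc]
  rw [← mul_assoc Uᴴ U, hU, one_mul]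

lemma mul_blockDiagonal_mul_conjTranspose (U : Matrix (m × o) (m × o) R)
    (M D : o → Matrix m m R) :
    U * blockDiagonal M * blockDiagonal D * (U * blockDiagonal M)ᴴ =
      U * blockDiagonal (fun s => M s * D s * (M s)ᴴ) * Uᴴ := by
  simp only [conjTranspose_mul, blockDiagonal_conjTranspose, blockDiagonal_mul, mul_assoc]

end BlockDiagonal

lemma one_kronecker_conjTranspose_mul_self {l R : Type*} [Fintype l] [DecidableEq l] [CommRing R]
    [StarRing R] {k : ℕ} {T : Matrix l l R} (hT : Tᴴ * T = 1) :
    ((1 : Matrix (Fin k) (Fin k) R) ⊗ₖ T)ᴴ * ((1 : Matrix (Fin k) (Fin k) R) ⊗ₖ T) = 1 := by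
  rw [conjTranspose_kronecker, conjTranspose_one, ← mul_kronecker_mul, one_mul, hT,
    one_kronecker_one]

variable {n : ℕ}

lemma invSqrtDiag_diagonal (f : Fin n → ℂ) :
    invSqrtDiag (diagonal f) = diagonal fun s => (((√(f s).re)⁻¹ : ℝ) : ℂ) := by
  simp [invSqrtDiag]

lemma diagonal_sqNorm (d₁ d₂ d₃ : Fin n → ℂ) :
    (diagonal d₁)ᴴ * diagonal d₁ + (diagonal d₂)ᴴ * diagonal d₂ + (diagonal d₃)ᴴ * diagonal d₃ =
      diagonal fun s => sqNorm (d₁ s) (d₂ s) (d₃ s) := by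
  simp only [diagonal_conjTranspose, diagonal_mul_diagonal, diagonal_add]
  rfl

lemma diagonal_spread (d₁ d₂ d₃ : Fin n → ℂ) :
    (3 : ℂ) • (diagonal fun s => sqNorm (d₁ s) (d₂ s) (d₃ s)) -
        (diagonal d₁ + diagonal d₂ + diagonal d₃) * (diagonal d₁ + diagonal d₂ + diagonal d₃)ᴴ =
      diagonal fun s => spread (d₁ s) (d₂ s) (d₃ s) := by
  simp only [diagonal_conjTranspose, diagonal_mul_diagonal, diagonal_add, ← diagonal_smul,
    diagonal_sub]
  rfl

lemma mul_hstack3 (U : Matrix (Fin 3 × Fin n) (Fin 3 × Fin n) ℂ)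
    (A B C : Matrix (Fin 3 × Fin n) (Fin n) ℂ) :
    U * hstack3 A B C = hstack3 (U * A) (U * B) (U * C) := by
  ext p ⟨j, s⟩
  fin_cases j <;> simp [hstack3, mul_apply]

lemma stack3_mul (A B C E : Matrix (Fin n) (Fin n) ℂ) :
    stack3 A B C * E = stack3 (A * E) (B * E) (C * E) := by
  ext ⟨i, r⟩ s
  fin_cases i <;> simp [stack3, mul_apply]

lemma hstack3_stack3_diagonal (M : Fin n → Matrix (Fin 3) (Fin 3) ℂ) :
    hstack3
      (stack3 (diagonal fun s => M s 0 0) (diagonal fun s => M s 1 0) (diagonal fun s => M s 2 0))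
      (stack3 (diagonal fun s => M s 0 1) (diagonal fun s => M s 1 1) (diagonal fun s => M s 2 1))
      (stack3 (diagonal fun s => M s 0 2) (diagonal fun s => M s 1 2) (diagonal fun s => M s 2 2))
      = blockDiagonal M := by
  ext ⟨i, r⟩ ⟨j, s⟩
  fin_cases i <;> fin_cases j <;> simp [hstack3, stack3, blockDiagonal_apply, diagonal_apply]

lemma blockdiag3_diagonal (q : Fin n → ℂ) :
    blockdiag3 (diagonal q) (diagonal q) = blockDiagonal fun s => diagonal ![q s, q s, 0] := by
  ext ⟨i, r⟩ ⟨j, s⟩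
  fin_cases i <;> fin_cases j <;> simp [blockdiag3, blockDiagonal_apply, diagonal_apply]

lemma hstack3_eq_blockDiagonal_unitCurlFrame (d₁ d₂ d₃ : Fin n → ℂ)
    {Λq Λs Λr : Matrix (Fin n) (Fin n) ℂ} (hΛq : Λq = diagonal fun s => sqNorm (d₁ s) (d₂ s) (d₃ s))
    (hΛs : Λs = diagonal d₁ + diagonal d₂ + diagonal d₃)
    (hΛr : Λr = diagonal fun s => spread (d₁ s) (d₂ s) (d₃ s)) :
    hstack3
      (stack3 (Λq - diagonal d₁ * Λsᴴ) (Λq - diagonal d₂ * Λsᴴ) (Λq - diagonal d₃ * Λsᴴ) *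
        invSqrtDiag (Λr * Λq))
      (stack3 ((diagonal d₃)ᴴ - (diagonal d₂)ᴴ) ((diagonal d₁)ᴴ - (diagonal d₃)ᴴ)
        ((diagonal d₂)ᴴ - (diagonal d₁)ᴴ) * invSqrtDiag Λr)
      (stack3 (diagonal d₁) (diagonal d₂) (diagonal d₃) * invSqrtDiag Λq) =
    blockDiagonal fun s => unitCurlFrame (d₁ s) (d₂ s) (d₃ s) := by
  subst hΛq hΛs hΛr
  rw [stack3_mul, stack3_mul, stack3_mul, ← hstack3_stack3_diagonal]
  congr 1 <;> congr 1 <;>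
    simp only [invSqrtDiag_diagonal, diagonal_conjTranspose, diagonal_add, diagonal_sub,
      diagonal_mul_diagonal] <;>
    congr 1 <;> funext s <;>
    simp only [unitCurlFrame, mul_diagonal] <;>
    simp [curlFrame]

lemma one_kronecker_mul_curlMat (S A₁ A₂ A₃ : Matrix (Fin n) (Fin n) ℂ) :
    ((1 : Matrix (Fin 3) (Fin 3) ℂ) ⊗ₖ S) * curlMat A₁ A₂ A₃ =
      curlMat (S * A₁) (S * A₂) (S * A₃) := by
  ext ⟨i, r⟩ ⟨j, s⟩
  fin_cases i <;> fin_cases j <;>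
    simp [curlMat, mul_apply, Fintype.sum_prod_type, Fin.sum_univ_three, one_apply]

lemma curlMat_mul_one_kronecker (S A₁ A₂ A₃ : Matrix (Fin n) (Fin n) ℂ) :
    curlMat A₁ A₂ A₃ * ((1 : Matrix (Fin 3) (Fin 3) ℂ) ⊗ₖ S) =
      curlMat (A₁ * S) (A₂ * S) (A₃ * S) := by
  ext ⟨i, r⟩ ⟨j, s⟩
  fin_cases i <;> fin_cases j <;>
    simp [curlMat, mul_apply, Fintype.sum_prod_type, one_apply]

lemma curlMat_diagonal (d₁ d₂ d₃ : Fin n → ℂ) :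
    curlMat (diagonal d₁) (diagonal d₂) (diagonal d₃) =
      blockDiagonal fun s => crossMatrix (d₁ s) (d₂ s) (d₃ s) := by
  ext ⟨i, r⟩ ⟨j, s⟩
  fin_cases i <;> fin_cases j <;>
    simp [curlMat, crossMatrix, blockDiagonal_apply, diagonal_apply, neg_ite]

lemma curlMat_eq_conj_blockDiagonal {T C₁ C₂ C₃ : Matrix (Fin n) (Fin n) ℂ} {d₁ d₂ d₃ : Fin n → ℂ}
    (hT' : T * Tᴴ = 1) (h₁ : C₁ * T = T * diagonal d₁) (h₂ : C₂ * T = T * diagonal d₂)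
    (h₃ : C₃ * T = T * diagonal d₃) :
    curlMat C₁ C₂ C₃ = ((1 : Matrix (Fin 3) (Fin 3) ℂ) ⊗ₖ T) *
      blockDiagonal (fun s => crossMatrix (d₁ s) (d₂ s) (d₃ s)) *
      ((1 : Matrix (Fin 3) (Fin 3) ℂ) ⊗ₖ T)ᴴ := by
  have hC {C : Matrix (Fin n) (Fin n) ℂ} {d : Fin n → ℂ} (h : C * T = T * diagonal d) :
      C = T * diagonal d * Tᴴ := by
    rw [← h, mul_assoc, hT', mul_one]
  rw [hC h₁, hC h₂, hC h₃, ← curlMat_mul_one_kronecker, ← one_kronecker_mul_curlMat,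
    curlMat_diagonal, conjTranspose_kronecker, conjTranspose_one]

end DoubleCurl

open DoubleCurl in
theorem stmt_15_general (n : ℕ)
    (T Λ₁ Λ₂ Λ₃ C₁ C₂ C₃ : Matrix (Fin n) (Fin n) ℂ)
    (hT : Tᴴ * T = 1) (hT' : T * Tᴴ = 1)
    (hΛ₁ : Λ₁.IsDiag) (hΛ₂ : Λ₂.IsDiag) (hΛ₃ : Λ₃.IsDiag)
    (h₁ : C₁ * T = T * Λ₁) (h₂ : C₂ * T = T * Λ₂) (h₃ : C₃ * T = T * Λ₃)
    (Λq Λs Λp : Matrix (Fin n) (Fin n) ℂ)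
    (hΛq : Λq = Λ₁ᴴ * Λ₁ + Λ₂ᴴ * Λ₂ + Λ₃ᴴ * Λ₃)
    (hΛs : Λs = Λ₁ + Λ₂ + Λ₃)
    (hΛp : Λp = Λs * Λsᴴ)
    (hq : ∀ s, 0 < (Λq s s).re)
    (hp : ∀ s, 0 < ((((3 : ℂ) • Λq - Λp)) s s).re)
    (Q₀ Q₁ Q₂ : Matrix (Fin 3 × Fin n) (Fin n) ℂ)
    (hQ₀ : Q₀ = ((1 : Matrix (Fin 3) (Fin 3) ℂ) ⊗ₖ T) * stack3 Λ₁ Λ₂ Λ₃ * invSqrtDiag Λq)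
    (hQ₁ : Q₁ = ((1 : Matrix (Fin 3) (Fin 3) ℂ) ⊗ₖ T)
      * stack3 (Λq - Λ₁ * Λsᴴ) (Λq - Λ₂ * Λsᴴ) (Λq - Λ₃ * Λsᴴ)
      * invSqrtDiag (((3 : ℂ) • Λq - Λp) * Λq))
    (hQ₂ : Q₂ = ((1 : Matrix (Fin 3) (Fin 3) ℂ) ⊗ₖ T)
      * stack3 (Λ₃ᴴ - Λ₂ᴴ) (Λ₁ᴴ - Λ₃ᴴ) (Λ₂ᴴ - Λ₁ᴴ)
      * invSqrtDiag ((3 : ℂ) • Λq - Λp))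
    (Q : Matrix (Fin 3 × Fin n) (Fin 3 × Fin n) ℂ)
    (hQ : Q = hstack3 Q₁ Q₂ Q₀) :
    Qᴴ * Q = 1 ∧ Q * Qᴴ = 1 ∧
    (curlMat C₁ C₂ C₃)ᴴ * curlMat C₁ C₂ C₃ = Q * blockdiag3 Λq Λq * Qᴴ := by
  obtain ⟨d₁, rfl⟩ : ∃ d, Λ₁ = diagonal d := ⟨Λ₁.diag, hΛ₁.diagonal_diag.symm⟩
  obtain ⟨d₂, rfl⟩ : ∃ d, Λ₂ = diagonal d := ⟨Λ₂.diag, hΛ₂.diagonal_diag.symm⟩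
  obtain ⟨d₃, rfl⟩ : ∃ d, Λ₃ = diagonal d := ⟨Λ₃.diag, hΛ₃.diagonal_diag.symm⟩
  have hΛq' := hΛq.trans (diagonal_sqNorm d₁ d₂ d₃)
  have hΛr : (3 : ℂ) • Λq - Λp = diagonal fun s => spread (d₁ s) (d₂ s) (d₃ s) := by
    rw [hΛp, hΛs, hΛq', diagonal_spread]
  set U := (1 : Matrix (Fin 3) (Fin 3) ℂ) ⊗ₖ T
  have hQU : Q = U * blockDiagonal fun s => unitCurlFrame (d₁ s) (d₂ s) (d₃ s) := by
    rw [hQ, hQ₀, hQ₁, hQ₂, Matrix.mul_assoc, Matrix.mul_assoc, Matrix.mul_assoc, ← mul_hstack3,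
      hstack3_eq_blockDiagonal_unitCurlFrame d₁ d₂ d₃ hΛq' hΛs hΛr]
  have hframe (s : Fin n) := unitCurlFrame_unitary_and_eigen
    (by simpa only [hΛq', diagonal_apply_eq] using hq s)
    (by simpa only [hΛr, diagonal_apply_eq] using hp s)
  have hU := one_kronecker_conjTranspose_mul_self (k := 3) hT
  have hQQ : Qᴴ * Q = 1 :=
    hQU ▸ conjTranspose_mul_self_mul_blockDiagonal_eq_one hU fun s => (hframe s).1
  refine ⟨hQQ, mul_eq_one_comm.mp hQQ, ?_⟩
  rw [curlMat_eq_conj_blockDiagonal hT' h₁ h₂ h₃, hΛq', blockdiag3_diagonal, hQU,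
    conjTranspose_mul_self_conj_blockDiagonal hU, mul_blockDiagonal_mul_conjTranspose]
  congr 2
  exact congrArg blockDiagonal (funext fun s => (hframe s).2.symm)

/-- Section 5.1: `Q = [Q₁, Q₂, Q₀]` is unitary and gives the eigen-decomposition
`C*C = Q blockdiag(Λq, Λq, 0) Q*` of the discrete double-curl matrix. -/
theorem stmt_15 (n : ℕ) (hn : 1 ≤ n)
    (T Λ₁ Λ₂ Λ₃ C₁ C₂ C₃ : Matrix (Fin n) (Fin n) ℂ)
    (hT : Tᴴ * T = 1) (hT' : T * Tᴴ = 1)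
    (hΛ₁ : Λ₁.IsDiag) (hΛ₂ : Λ₂.IsDiag) (hΛ₃ : Λ₃.IsDiag)
    (h₁ : C₁ * T = T * Λ₁) (h₂ : C₂ * T = T * Λ₂) (h₃ : C₃ * T = T * Λ₃)
    (Λq Λs Λp : Matrix (Fin n) (Fin n) ℂ)
    (hΛq : Λq = Λ₁ᴴ * Λ₁ + Λ₂ᴴ * Λ₂ + Λ₃ᴴ * Λ₃)
    (hΛs : Λs = Λ₁ + Λ₂ + Λ₃)
    (hΛp : Λp = Λs * Λsᴴ)
    (hq : ∀ s, 0 < (Λq s s).re)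
    (hp : ∀ s, 0 < ((((3 : ℂ) • Λq - Λp)) s s).re)
    (Q₀ Q₁ Q₂ : Matrix (Fin 3 × Fin n) (Fin n) ℂ)
    (hQ₀ : Q₀ = ((1 : Matrix (Fin 3) (Fin 3) ℂ) ⊗ₖ T) * stack3 Λ₁ Λ₂ Λ₃ * invSqrtDiag Λq)
    (hQ₁ : Q₁ = ((1 : Matrix (Fin 3) (Fin 3) ℂ) ⊗ₖ T)
      * stack3 (Λq - Λ₁ * Λsᴴ) (Λq - Λ₂ * Λsᴴ) (Λq - Λ₃ * Λsᴴ)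
      * invSqrtDiag (((3 : ℂ) • Λq - Λp) * Λq))
    (hQ₂ : Q₂ = ((1 : Matrix (Fin 3) (Fin 3) ℂ) ⊗ₖ T)
      * stack3 (Λ₃ᴴ - Λ₂ᴴ) (Λ₁ᴴ - Λ₃ᴴ) (Λ₂ᴴ - Λ₁ᴴ)
      * invSqrtDiag ((3 : ℂ) • Λq - Λp))
    (Q : Matrix (Fin 3 × Fin n) (Fin 3 × Fin n) ℂ)
    (hQ : Q = hstack3 Q₁ Q₂ Q₀) :
    Qᴴ * Q = 1 ∧ Q * Qᴴ = 1 ∧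
    (curlMat C₁ C₂ C₃)ᴴ * curlMat C₁ C₂ C₃ = Q * blockdiag3 Λq Λq * Qᴴ :=
  stmt_15_general n T Λ₁ Λ₂ Λ₃ C₁ C₂ C₃ hT hT' hΛ₁ hΛ₂ hΛ₃ h₁ h₂ h₃ Λq Λs Λp hΛq hΛs hΛp hq hp Q₀ Q₁
    Q₂ hQ₀ hQ₁ hQ₂ Q hQ
end
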